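/- Let f : ℝⁿ → ℝ ∪ {+∞} be proper lsc with f(x̄) = 0, x̄ = 0, and suppose f(x) ≥ l‖x‖² on a ball B_s(0) for some l > 0, and suppose the mapping h(v) = (∂f)⁻¹(v) ∩ B_s(0) is at most single-valued and Lipschitz with constant κ on a neighborhood V of 0 (on its domain). If for each v ∈ V the set argmin{f(x) − ⟨v, x⟩ : x ∈ B_s(0)} is nonempty and contained in the interior of B_s(0), then argmin{f(x) − ⟨v, x⟩ : x ∈ B_s(0)} ⊆ h(v) for all v ∈ V, and consequently v ↦ argmin{f(x) − ⟨v, x⟩ : x ∈ B_s(0)} is single-valued and Lipschitz with constant κ on V; i.e., 0 is a tilt-stable local minimizer of f with constant κ. -/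
import Mathlib


/- STATEMENT 12: quadratic growth on a ball plus an at-most-single-valued,
κ-Lipschitz localization h(v) = (∂f)⁻¹(v) ∩ B_s(0) of the inverse limiting
subdifferential, together with interior nonempty argmins of the tilted
problems, imply that the tilted argmin mapping is single-valued and κ-Lipschitz
near 0; i.e. 0 is a tilt-stable local minimizer of f with constant κ. -/

open scoped RealInnerProductSpace
open Filter Topology Classical

noncomputable section

variable {n : ℕ}

/-- Fréchet (regular) subdifferential. -/
def FSubdiff (f : EuclideanSpace ℝ (Fin n) → EReal) (x : EuclideanSpace ℝ (Fin n)) :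
    Set (EuclideanSpace ℝ (Fin n)) :=
  {v | f x ≠ ⊤ ∧ f x ≠ ⊥ ∧ ∀ ε : ℝ, 0 < ε →
    ∀ᶠ y in 𝓝 x, f x + ((⟪v, y - x⟫ - ε * ‖y - x‖ : ℝ) : EReal) ≤ f y}

/-- Limiting (Mordukhovich) subdifferential. -/
def LSubdiff (f : EuclideanSpace ℝ (Fin n) → EReal) (x : EuclideanSpace ℝ (Fin n)) :
    Set (EuclideanSpace ℝ (Fin n)) :=
  {v | ∃ xk vk : ℕ → EuclideanSpace ℝ (Fin n),
    (∀ k, vk k ∈ FSubdiff f (xk k)) ∧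
    Tendsto xk atTop (𝓝 x) ∧ Tendsto vk atTop (𝓝 v) ∧
    Tendsto (fun k => f (xk k)) atTop (𝓝 (f x))}

/-- Minimizers of the tilted problem x ↦ f(x) − ⟨v,x⟩ over the closed ball B_s(0). -/
def ArgSet (f : EuclideanSpace ℝ (Fin n) → EReal) (s : ℝ) (v : EuclideanSpace ℝ (Fin n)) :
    Set (EuclideanSpace ℝ (Fin n)) :=
  {x | x ∈ Metric.closedBall (0 : EuclideanSpace ℝ (Fin n)) s ∧
    ∀ y ∈ Metric.closedBall (0 : EuclideanSpace ℝ (Fin n)) s,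
      f x - ((⟪v, x⟫ : ℝ) : EReal) ≤ f y - ((⟪v, y⟫ : ℝ) : EReal)}

/-- Localization of (∂f)⁻¹ in the ball B_s(0). -/
def HSet (f : EuclideanSpace ℝ (Fin n) → EReal) (s : ℝ) (v : EuclideanSpace ℝ (Fin n)) :
    Set (EuclideanSpace ℝ (Fin n)) :=
  {x | x ∈ Metric.closedBall (0 : EuclideanSpace ℝ (Fin n)) s ∧ v ∈ LSubdiff f x}

theorem statement12 {n : ℕ} (f : EuclideanSpace ℝ (Fin n) → EReal)
    (hproper : (∀ x, f x ≠ ⊥) ∧ ∃ x, f x ≠ ⊤) (hlsc : LowerSemicontinuous f)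
    (h0 : f 0 = 0)
    (l s κ : ℝ) (hl : 0 < l) (hs : 0 < s) (hκ : 0 < κ)
    (hgrowth : ∀ x ∈ Metric.closedBall (0 : EuclideanSpace ℝ (Fin n)) s,
      ((l * ‖x‖ ^ 2 : ℝ) : EReal) ≤ f x)
    (V : Set (EuclideanSpace ℝ (Fin n))) (hV : V ∈ 𝓝 (0 : EuclideanSpace ℝ (Fin n)))
    (hsingle : ∀ v ∈ V, ∀ x₁ ∈ HSet f s v, ∀ x₂ ∈ HSet f s v, x₁ = x₂)
    (hlip : ∀ v ∈ V, ∀ v' ∈ V, ∀ x ∈ HSet f s v, ∀ x' ∈ HSet f s v',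
      ‖x - x'‖ ≤ κ * ‖v - v'‖)
    (hargmin : ∀ v ∈ V, (ArgSet f s v).Nonempty ∧
      ArgSet f s v ⊆ Metric.ball (0 : EuclideanSpace ℝ (Fin n)) s) :
    (∀ v ∈ V, ArgSet f s v ⊆ HSet f s v) ∧
    ∃ g : EuclideanSpace ℝ (Fin n) → EuclideanSpace ℝ (Fin n),
      (∀ v ∈ V, ArgSet f s v = {g v}) ∧
      (∀ v ∈ V, ∀ v' ∈ V, ‖g v - g v'‖ ≤ κ * ‖v - v'‖) := by
  have key : ∀ v ∈ V, ArgSet f s v ⊆ HSet f s v := by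
    intro v hv x hx
    obtain ⟨hxball, hxmin⟩ := hx
    have hxint : x ∈ Metric.ball (0 : EuclideanSpace ℝ (Fin n)) s :=
      (hargmin v hv).2 ⟨hxball, hxmin⟩
    -- f x is a real number
    have hbot := hproper.1 x
    have hle0 : f x - ((⟪v, x⟫ : ℝ) : EReal) ≤ 0 := by
      have := hxmin 0 (by simpa using le_of_lt hs)
      simpa [h0, inner_zero_right] using this
    have htop : f x ≠ ⊤ := by
      intro h
      rw [h] at hle0
      simp [EReal.top_sub_coe] at hle0
    set a : ℝ := (f x).toReal with ha
    have hfx : f x = (a : EReal) := (EReal.coe_toReal htop hbot).symm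
    -- Fréchet subdifferential membership
    have hF : v ∈ FSubdiff f x := by
      refine ⟨htop, hbot, ?_⟩
      intro ε hε
      have hball : Metric.ball (0 : EuclideanSpace ℝ (Fin n)) s ∈ 𝓝 x :=
        Metric.isOpen_ball.mem_nhds hxint
      filter_upwards [hball] with y hy
      have hyc : y ∈ Metric.closedBall (0 : EuclideanSpace ℝ (Fin n)) s :=
        Metric.ball_subset_closedBall hy
      have hmin := hxmin y hyc
      by_cases hytop : f y = ⊤
      · simp [hytop]
      · have hybot := hproper.1 y
        set b : ℝ := (f y).toReal with hb
        have hfy : f y = (b : EReal) := (EReal.coe_toReal hytop hybot).symm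
        rw [hfx, hfy] at hmin ⊢
        rw [← EReal.coe_sub, ← EReal.coe_sub, EReal.coe_le_coe_iff] at hmin
        rw [← EReal.coe_add, EReal.coe_le_coe_iff]
        have hinner : ⟪v, y - x⟫ = ⟪v, y⟫ - ⟪v, x⟫ := inner_sub_right v y x
        have hnn : 0 ≤ ε * ‖y - x‖ := mul_nonneg (le_of_lt hε) (norm_nonneg _)
        rw [hinner]
        linarith
    exact ⟨hxball, fun _ => x, fun _ => v, fun _ => hF, tendsto_const_nhds,
      tendsto_const_nhds, tendsto_const_nhds⟩
  refine ⟨key, ?_⟩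
  classical
  refine ⟨fun v => if h : v ∈ V then (hargmin v h).1.choose else 0, ?_, ?_⟩
  · intro v hv
    have hg : (hargmin v hv).1.choose ∈ ArgSet f s v := (hargmin v hv).1.choose_spec
    ext x
    simp only [Set.mem_singleton_iff, dif_pos hv]
    constructor
    · intro hx
      exact hsingle v hv x (key v hv hx) _ (key v hv hg)
    · intro hx; rw [hx]; exact hg
  · intro v hv v' hv'
    have hg : (hargmin v hv).1.choose ∈ ArgSet f s v := (hargmin v hv).1.choose_spec
    have hg' : (hargmin v' hv').1.choose ∈ ArgSet f s v' := (hargmin v' hv').1.choose_spec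
    simp only [dif_pos hv, dif_pos hv']
    exact hlip v hv v' hv' _ (key v hv hg) _ (key v' hv' hg')

end
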